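/- Under hypothesis (H1) and assuming that λ_u, λ_v, λ_b exist, for every S in the interval I one has H(S) > 0. -/

import Mathlib

/-!
Since `f` and `g` increase strictly, on `I` the shifted rates `φ = f - D_u` and `ψ = g - D_v` have
opposite signs and `ψ < b`; in the first case because `ψ < 0 < b`, in the second because
`S < λ_b`. Then `U > 0`, and `V = U · (-φ / ψ) > 0`, so both terms of `H` are positive.
-/

open Set

theorem strictMonoOn_Ici_of_deriv_pos {f : ℝ → ℝ} (hf : ContinuousOn f (Ici 0))
    (hf' : ∀ x > (0 : ℝ), 0 < deriv f x) : StrictMonoOn f (Ici 0) :=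
  strictMonoOn_of_deriv_pos (convex_Ici 0) hf fun x hx ↦ hf' x (by rwa [interior_Ici] at hx)

theorem StrictMonoOn.lt_of_nonneg {f : ℝ → ℝ} (hf : StrictMonoOn f (Ici 0)) {x y : ℝ}
    (hx : 0 ≤ x) (hxy : x < y) : f x < f y :=
  hf (mem_Ici.2 hx) (mem_Ici.2 (hx.trans hxy.le)) hxy

section Coefficients

variable {a b φ ψ : ℝ}

theorem coeffU_pos (ha : 0 < a) (hψb : ψ < b) (hφψ : φ * ψ < 0) :
    0 < φ * (ψ - b) / (a * (ψ - φ)) := by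
  rcases mul_neg_iff.1 hφψ with ⟨hφ, hψ⟩ | ⟨hφ, hψ⟩
  · exact div_pos_of_neg_of_neg (mul_neg_of_pos_of_neg hφ (by linarith))
      (mul_neg_of_pos_of_neg ha (by linarith))
  · exact div_pos (mul_pos_of_neg_of_neg hφ (by linarith)) (mul_pos ha (by linarith))

theorem coeffV_eq_coeffU_mul :
    -φ ^ 2 * (ψ - b) / (a * (ψ - φ) * ψ) = φ * (ψ - b) / (a * (ψ - φ)) * (-φ / ψ) := by
  rw [div_mul_div_comm]
  ring

theorem coeffV_pos (ha : 0 < a) (hψb : ψ < b) (hφψ : φ * ψ < 0) :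
    0 < -φ ^ 2 * (ψ - b) / (a * (ψ - φ) * ψ) := by
  rw [coeffV_eq_coeffU_mul, neg_div]
  exact mul_pos (coeffU_pos ha hψb hφψ) (neg_pos.2 (div_neg_iff.2 (mul_neg_iff.1 hφψ)))

end Coefficients

theorem H_pos_on_I_general
    (f g : ℝ → ℝ) (a b yu yv Du Dv : ℝ)
    (ha : 0 < a) (hb : 0 < b)
    (hyu : 0 < yu) (hyv : 0 < yv)
    (hfC : ContDiffOn ℝ 1 f (Set.Ici 0)) (hgC : ContDiffOn ℝ 1 g (Set.Ici 0))
    (hf0 : f 0 = 0) (hg0 : g 0 = 0)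
    (hf' : ∀ S > (0:ℝ), 0 < deriv f S) (hg' : ∀ S > (0:ℝ), 0 < deriv g S)
    (phi psi U V H : ℝ → ℝ)
    (hphi : ∀ S, phi S = f S - Du) (hpsi : ∀ S, psi S = g S - Dv)
    (hU : ∀ S, U S = phi S * (psi S - b) / (a * (psi S - phi S)))
    (hV : ∀ S, V S = -((phi S)^2) * (psi S - b) / (a * (psi S - phi S) * psi S))
    (hH : ∀ S, H S = (1/yu) * f S * U S + (1/yv) * g S * V S)
    (lu lv lb : ℝ)
    (hlu0 : 0 < lu) (hlu : f lu = Du)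
    (hlv0 : 0 < lv) (hlv : g lv = Dv)
    (hlb : g lb = Dv + b) :
    ∀ S : ℝ, (if lu < lv then lu < S ∧ S < lv else lv < S ∧ S < min lu lb) →
      0 < H S := by
  have hfm := strictMonoOn_Ici_of_deriv_pos hfC.continuousOn hf'
  have hgm := strictMonoOn_Ici_of_deriv_pos hgC.continuousOn hg'
  intro S hS
  obtain ⟨hS0, hφψ, hψb⟩ : 0 < S ∧ phi S * psi S < 0 ∧ psi S < b := by
    simp only [hphi, hpsi]
    split_ifs at hS with hcase
    · obtain ⟨hluS, hSlv⟩ := hS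
      have hS0 := hlu0.trans hluS
      have hfS := hlu ▸ hfm.lt_of_nonneg hlu0.le hluS
      have hgS := hlv ▸ hgm.lt_of_nonneg hS0.le hSlv
      exact ⟨hS0, mul_neg_of_pos_of_neg (by linarith) (by linarith), by linarith⟩
    · obtain ⟨hlvS, hSlu, hSlb⟩ : lv < S ∧ S < lu ∧ S < lb := by simpa only [lt_min_iff] using hS
      have hS0 := hlv0.trans hlvS
      have hfS := hlu ▸ hfm.lt_of_nonneg hS0.le hSlu
      have hgS := hlv ▸ hgm.lt_of_nonneg hlv0.le hlvS
      have hgSb := hlb ▸ hgm.lt_of_nonneg hS0.le hSlb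
      exact ⟨hS0, mul_neg_of_neg_of_pos (by linarith) (by linarith), by linarith⟩
  have hUS : 0 < U S := hU S ▸ coeffU_pos ha hψb hφψ
  have hVS : 0 < V S := hV S ▸ coeffV_pos ha hψb hφψ
  have hfS : 0 < f S := hf0 ▸ hfm.lt_of_nonneg le_rfl hS0
  have hgS : 0 < g S := hg0 ▸ hgm.lt_of_nonneg le_rfl hS0
  rw [hH]
  positivity

/-- Under (H1) and existence of `lu, lv, lb`, for every `S` in
the interval `I` one has `H S > 0`. -/
theorem H_pos_on_I
    (f g : ℝ → ℝ) (D Sin a b yu yv Du Dv : ℝ)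
    (hD : 0 < D) (hSin : 0 < Sin) (ha : 0 < a) (hb : 0 < b)
    (hyu : 0 < yu) (hyv : 0 < yv) (hDu : 0 < Du) (hDv : 0 < Dv)
    (hfC : ContDiffOn ℝ 1 f (Set.Ici 0)) (hgC : ContDiffOn ℝ 1 g (Set.Ici 0))
    (hf0 : f 0 = 0) (hg0 : g 0 = 0)
    (hf' : ∀ S > (0:ℝ), 0 < deriv f S) (hg' : ∀ S > (0:ℝ), 0 < deriv g S)
    (phi psi U V H : ℝ → ℝ)
    (hphi : ∀ S, phi S = f S - Du) (hpsi : ∀ S, psi S = g S - Dv)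
    (hU : ∀ S, U S = phi S * (psi S - b) / (a * (psi S - phi S)))
    (hV : ∀ S, V S = -((phi S)^2) * (psi S - b) / (a * (psi S - phi S) * psi S))
    (hH : ∀ S, H S = (1/yu) * f S * U S + (1/yv) * g S * V S)
    (lu lv lb : ℝ)
    (hlu0 : 0 < lu) (hlu : f lu = Du)
    (hlv0 : 0 < lv) (hlv : g lv = Dv)
    (hlb0 : 0 < lb) (hlb : g lb = Dv + b) :
    ∀ S : ℝ, (if lu < lv then lu < S ∧ S < lv else lv < S ∧ S < min lu lb) →
      0 < H S :=
  H_pos_on_I_general f g a b yu yv Du Dv ha hb hyu hyv hfC hgC hf0 hg0 hf' hg' phi psi U V H hphi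
    hpsi hU hV hH lu lv lb hlu0 hlu hlv0 hlv hlb
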